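/- arXiv:2510.02075 — 2 statements merged into one kernel-verified Lean document; each statement's English description precedes it below -/
import Mathlib

section
/- For all integers a, b, c, d, the identity H_a·H_b·A^c·A^d + H_a·(-A)^{-b}·H_c·A^d + (-A)^{-a}·H_b·A^c·H_d = H_{a+d}·H_{b+c} - (-A)^{-a-b}·H_c·H_d holds in ℤ[A, A^{-1}]. -/
open LaurentPolynomial

/-- The Laurent polynomial `A` (the variable), as a unit of `ℤ[A, A⁻¹]`. -/
noncomputable def A : (LaurentPolynomial ℤ)ˣ := (isUnit_T (R := ℤ) 1).unit

/-- `P u k` is the `k`-th integer power of the unit `u`, viewed in `ℤ[A, A⁻¹]`. -/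
noncomputable def P (u : (LaurentPolynomial ℤ)ˣ) (k : ℤ) : LaurentPolynomial ℤ :=
  ((u ^ k : (LaurentPolynomial ℤ)ˣ) : LaurentPolynomial ℤ)

/-- `H k = A^k - (-A)^(-k)` in `ℤ[A, A⁻¹]`. -/
noncomputable def H (k : ℤ) : LaurentPolynomial ℤ :=
  P A k - P (-A) (-k)

theorem three_term_sum (a b c d : ℤ) :
    H a * H b * P A c * P A d + H a * P (-A) (-b) * H c * P A d
      + P (-A) (-a) * H b * P A c * H d
    = H (a + d) * H (b + c) - P (-A) (-a - b) * H c * H d := by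
  have hP : ∀ (u : (LaurentPolynomial ℤ)ˣ) (j k : ℤ), P u (j + k) = P u j * P u k := by
    intro u j k
    simp [P, zpow_add]
  simp only [H]
  rw [show -a - b = -a + -b by ring, show (-(a+d) : ℤ) = -a + -d by ring,
    show (-(b+c) : ℤ) = -b + -c by ring]
  simp only [hP]
  ring
end

section
/- Let x ≥ 1 and s : Fin x → {0,1}, with a_j, b_j defined as in the exponent bookkeeping above, and k_s = #{i : s_i = 0} − #{i : s_i = 1}. Then Σ_{j=1}^{x} (-1)^{j-1}(A^{a_j} + A^{b_j}) = A^{k_s} + (-1)^{k_s+1} A^{-k_s} in ℤ[A, A^{-1}]. -/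
open LaurentPolynomial

/-- `e_j` : positions before `j` contribute `+1` for value `1` and `-1` for value `0`;
positions after `j` contribute `+1` for value `0` and `-1` for value `1`. -/
def eFun (x : ℕ) (s : Fin x → Fin 2) (j : Fin x) : ℤ :=
  ((Finset.univ.filter fun i : Fin x => i < j ∧ s i = 1).card : ℤ)
    - ((Finset.univ.filter fun i : Fin x => i < j ∧ s i = 0).card : ℤ)
    + ((Finset.univ.filter fun i : Fin x => j < i ∧ s i = 0).card : ℤ)
    - ((Finset.univ.filter fun i : Fin x => j < i ∧ s i = 1).card : ℤ)

/-- `a_j = e_j + 1` if `s_j = 0`, and `e_j - 1` if `s_j = 1`. -/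
def aFun (x : ℕ) (s : Fin x → Fin 2) (j : Fin x) : ℤ :=
  if s j = 0 then eFun x s j + 1 else eFun x s j - 1

/-- `b_j = e_j - 1` if `s_j = 0`, and `e_j + 1` if `s_j = 1`. -/
def bFun (x : ℕ) (s : Fin x → Fin 2) (j : Fin x) : ℤ :=
  if s j = 0 then eFun x s j - 1 else eFun x s j + 1

/-- `k_s = #{i : s_i = 0} - #{i : s_i = 1}`. -/
def kFun (x : ℕ) (s : Fin x → Fin 2) : ℤ :=
  ((Finset.univ.filter fun i : Fin x => s i = 0).card : ℤ)
    - ((Finset.univ.filter fun i : Fin x => s i = 1).card : ℤ)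

lemma fin2_cases (a : Fin 2) : a = 0 ∨ a = 1 := by
  fin_cases a
  · exact Or.inl rfl
  · exact Or.inr rfl

/-- The "running" exponent: threshold version of `eFun`. -/
def F (x : ℕ) (s : Fin x → Fin 2) (m : ℕ) : ℤ :=
  ∑ i : Fin x,
    if (i : ℕ) < m then (if s i = 1 then (1 : ℤ) else -1)
    else (if s i = 0 then (1 : ℤ) else -1)

lemma eFun_eq_sum (x : ℕ) (s : Fin x → Fin 2) (j : Fin x) :
    eFun x s j = ∑ i : Fin x,
      (if (i : ℕ) < (j : ℕ) then (if s i = 1 then (1 : ℤ) else -1)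
        else if (j : ℕ) < (i : ℕ) then (if s i = 0 then (1 : ℤ) else -1) else 0) := by
  unfold eFun
  simp only [Finset.card_filter, Fin.lt_def]
  push_cast
  rw [← Finset.sum_sub_distrib, ← Finset.sum_add_distrib, ← Finset.sum_sub_distrib]
  apply Finset.sum_congr rfl
  intro i _
  rcases Nat.lt_trichotomy (i : ℕ) (j : ℕ) with hij | hij | hij
  · have h2 : ¬ (j : ℕ) < (i : ℕ) := by omega
    rcases fin2_cases (s i) with h | h <;> simp [h, hij, h2]
  · have h1 : ¬ (i : ℕ) < (j : ℕ) := by omega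
    have h2 : ¬ (j : ℕ) < (i : ℕ) := by omega
    rcases fin2_cases (s i) with h | h <;> simp [h, h1, h2]
  · have h1 : ¬ (i : ℕ) < (j : ℕ) := by omega
    rcases fin2_cases (s i) with h | h <;> simp [h, h1, hij]

lemma aFun_eq (x : ℕ) (s : Fin x → Fin 2) (j : Fin x) : aFun x s j = F x s (j : ℕ) := by
  have hv := eFun_eq_sum x s j
  unfold aFun F
  have hpt : ∀ i : Fin x,
      (if (i : ℕ) < (j : ℕ) then (if s i = 1 then (1 : ℤ) else -1)
        else (if s i = 0 then (1 : ℤ) else -1))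
      = (if (i : ℕ) < (j : ℕ) then (if s i = 1 then (1 : ℤ) else -1)
          else if (j : ℕ) < (i : ℕ) then (if s i = 0 then (1 : ℤ) else -1) else 0)
        + (if i = j then (if s j = 0 then (1 : ℤ) else -1) else 0) := by
    intro i
    rcases Nat.lt_trichotomy (i : ℕ) (j : ℕ) with hij | hij | hij
    · have hne : i ≠ j := by intro h; subst h; omega
      simp [hij, Nat.lt_asymm hij, hne]
    · have heq : i = j := Fin.ext hij
      subst heq
      simp
    · have hne : i ≠ j := by intro h; subst h; omega
      have hnlt : ¬ (i : ℕ) < (j : ℕ) := Nat.lt_asymm hij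
      simp [hij, hnlt, hne]
  rw [Finset.sum_congr rfl fun i _ => hpt i, Finset.sum_add_distrib,
    Finset.sum_ite_eq' Finset.univ j (fun _ => (if s j = 0 then (1 : ℤ) else -1))]
  simp only [Finset.mem_univ, if_true]
  rw [← hv]
  by_cases h : s j = 0 <;> simp [h] <;> ring

lemma bFun_eq (x : ℕ) (s : Fin x → Fin 2) (j : Fin x) : bFun x s j = F x s ((j : ℕ) + 1) := by
  have hv := eFun_eq_sum x s j
  unfold bFun F
  have hpt : ∀ i : Fin x,
      (if (i : ℕ) < (j : ℕ) + 1 then (if s i = 1 then (1 : ℤ) else -1)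
        else (if s i = 0 then (1 : ℤ) else -1))
      = (if (i : ℕ) < (j : ℕ) then (if s i = 1 then (1 : ℤ) else -1)
          else if (j : ℕ) < (i : ℕ) then (if s i = 0 then (1 : ℤ) else -1) else 0)
        + (if i = j then (if s j = 0 then (-1 : ℤ) else 1) else 0) := by
    intro i
    rcases Nat.lt_trichotomy (i : ℕ) (j : ℕ) with hij | hij | hij
    · have hne : i ≠ j := by intro h; subst h; omega
      simp [hij, Nat.lt_asymm hij, hne, Nat.lt_succ_of_lt hij]
    · have heq : i = j := Fin.ext hij
      subst heq
      rcases fin2_cases (s i) with h | h <;> simp [h]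
    · have hne : i ≠ j := by intro h; subst h; omega
      have h1 : ¬ (i : ℕ) < (j : ℕ) + 1 := by omega
      have h2 : ¬ (i : ℕ) < (j : ℕ) := by omega
      simp [hij, h1, h2, hne]
  rw [Finset.sum_congr rfl fun i _ => hpt i, Finset.sum_add_distrib,
    Finset.sum_ite_eq' Finset.univ j (fun _ => (if s j = 0 then (-1 : ℤ) else 1))]
  simp only [Finset.mem_univ, if_true]
  rw [← hv]
  by_cases h : s j = 0 <;> simp [h] <;> ring

lemma F_zero (x : ℕ) (s : Fin x → Fin 2) : F x s 0 = kFun x s := by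
  unfold F kFun
  simp only [Finset.card_filter]
  push_cast
  rw [← Finset.sum_sub_distrib]
  apply Finset.sum_congr rfl
  intro i _
  rcases fin2_cases (s i) with h | h <;> simp [h]

lemma F_top (x : ℕ) (s : Fin x → Fin 2) : F x s x = -kFun x s := by
  unfold F kFun
  rw [neg_sub]
  simp only [Finset.card_filter]
  push_cast
  rw [← Finset.sum_sub_distrib]
  apply Finset.sum_congr rfl
  intro i _
  rcases fin2_cases (s i) with h | h <;> simp [h, i.isLt]

lemma kFun_parity (x : ℕ) (s : Fin x → Fin 2) : Even (kFun x s + x) := by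
  have h : (Finset.univ.filter fun i : Fin x => s i = 0).card
      + (Finset.univ.filter fun i : Fin x => s i = 1).card = x := by
    have h1 : (Finset.univ.filter fun i : Fin x => s i = 1)
        = Finset.univ.filter fun i : Fin x => ¬ (s i = 0) := by
      apply Finset.filter_congr
      intro i _
      rcases fin2_cases (s i) with h | h <;> simp [h]
    rw [h1, Finset.card_filter_add_card_filter_not]
    simp
  unfold kFun
  refine ⟨((Finset.univ.filter fun i : Fin x => s i = 0).card : ℤ), ?_⟩
  omega

lemma telescope {R : Type*} [CommRing R] (g : ℕ → R) (m : ℕ) :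
    ∑ j ∈ Finset.range (m + 1), (-1 : R) ^ j * (g j + g (j + 1))
      = g 0 + (-1) ^ m * g (m + 1) := by
  induction m with
  | zero => simp [Finset.sum_range_succ]
  | succ n ih => rw [Finset.sum_range_succ, ih]; ring

lemma neg_one_zpow_even {n : ℤ} (h : Even n) :
    (((-1 : (LaurentPolynomial ℤ)ˣ) ^ n : (LaurentPolynomial ℤ)ˣ) : LaurentPolynomial ℤ) = 1 := by
  rw [Even.neg_one_zpow h, Units.val_one]

lemma neg_one_zpow_odd {n : ℤ} (h : Odd n) :
    (((-1 : (LaurentPolynomial ℤ)ˣ) ^ n : (LaurentPolynomial ℤ)ˣ) : LaurentPolynomial ℤ) = -1 := by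
  obtain ⟨m, rfl⟩ := h
  rw [zpow_add, zpow_mul, zpow_one,
    show ((-1 : (LaurentPolynomial ℤ)ˣ)) ^ (2 : ℤ) = 1 by
      rw [show (2 : ℤ) = ((2 : ℕ) : ℤ) from rfl, zpow_natCast, neg_one_sq],
    one_zpow, one_mul, Units.val_neg, Units.val_one]

theorem alternating_sum_eq_H (x : ℕ) (hx : 1 ≤ x) (s : Fin x → Fin 2) :
    ∑ j : Fin x, (-1 : LaurentPolynomial ℤ) ^ (j : ℕ) * (P A (aFun x s j) + P A (bFun x s j))
      = P A (kFun x s) + P (-1) (kFun x s + 1) * P A (-kFun x s) := by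
  obtain ⟨m, rfl⟩ : ∃ m, x = m + 1 := ⟨x - 1, by omega⟩
  have hstep : ∀ j : Fin (m + 1),
      (-1 : LaurentPolynomial ℤ) ^ (j : ℕ) * (P A (aFun (m + 1) s j) + P A (bFun (m + 1) s j))
      = (fun n => (-1 : LaurentPolynomial ℤ) ^ n
          * (P A (F (m + 1) s n) + P A (F (m + 1) s (n + 1)))) (j : ℕ) := by
    intro j
    simp only [aFun_eq, bFun_eq]
  rw [Finset.sum_congr rfl fun j _ => hstep j,
    Fin.sum_univ_eq_sum_range
      (fun n => (-1 : LaurentPolynomial ℤ) ^ n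
        * (P A (F (m + 1) s n) + P A (F (m + 1) s (n + 1)))) (m + 1)]
  have key := telescope (fun n => P A (F (m + 1) s n)) m
  rw [key, F_zero, F_top]
  have hpar := kFun_parity (m + 1) s
  have hneg : ((-1 : LaurentPolynomial ℤ)) ^ m = P (-1) (kFun (m + 1) s + 1) := by
    rcases Int.even_or_odd (kFun (m + 1) s + 1) with he | ho
    · have hm : Even m := by
        rw [Nat.even_iff]
        obtain ⟨r, hr⟩ := hpar
        obtain ⟨t, ht⟩ := he
        omega
      rw [P, neg_one_zpow_even he, Even.neg_one_pow hm]
    · have hm : Odd m := by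
        rw [Nat.odd_iff]
        obtain ⟨r, hr⟩ := hpar
        obtain ⟨t, ht⟩ := ho
        omega
      rw [P, neg_one_zpow_odd ho, Odd.neg_one_pow hm]
  rw [hneg]
end
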